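/- arXiv:2212.00879 — 2 statements merged into one kernel-verified Lean document; each statement's English description precedes it below -/
import Mathlib

section
/- (Folklore multilinear Lipschitz bound) Let C : [-1,1]^N → [-1,1] be a multilinear function (bounded by 1 in absolute value on the cube). Then for all z, z' ∈ [-1,1]^N, |C(z) − C(z')| ≤ 2N·‖z − z'‖_∞. -/
/-!
Along each coordinate line a multilinear function is affine, and an affine function of
`t ∈ [-1, 1]` bounded by `1` at `t = ±1` has slope at most `1`. So on the cube the function is
`1`-Lipschitz in each coordinate separately; changing the coordinates one at a time gives
`|C z - C z'| ≤ ∑ i, |z i - z' i| ≤ N ‖z - z'‖`.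
-/

open Finset Function

theorem exists_sum_prod_update_eq_add_mul {ι R : Type*} [Fintype ι] [DecidableEq ι]
    [CommRing R] (coef : Finset ι → R) (w : ι → R) (j : ι) :
    ∃ a b : R, ∀ t, ∑ S : Finset ι, coef S * ∏ i ∈ S, update w j t i = a + b * t := by
  refine ⟨∑ S : Finset ι, coef S * (if j ∈ S then 0 else ∏ i ∈ S, w i),
    ∑ S : Finset ι, coef S * (if j ∈ S then ∏ i ∈ S \ {j}, w i else 0), fun t => ?_⟩
  rw [sum_mul, ← sum_add_distrib]
  refine sum_congr rfl fun S _ => ?_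
  by_cases hj : j ∈ S
  · simp only [prod_update_of_mem hj, if_pos hj]; ring
  · simp only [prod_update_of_notMem hj, if_neg hj]; ring

theorem abs_add_mul_sub_add_mul_le {a b t s : ℝ} (h₁ : |a + b| ≤ 1) (h₂ : |a - b| ≤ 1) :
    |(a + b * t) - (a + b * s)| ≤ |t - s| := by
  have hb : |b| ≤ 1 := by
    have : |2 * b| ≤ 2 := by
      calc |2 * b| = |(a + b) - (a - b)| := by ring_nf
        _ ≤ |a + b| + |a - b| := abs_sub _ _
        _ ≤ 2 := by linarith
    rw [abs_mul, abs_two] at this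
    linarith
  calc |(a + b * t) - (a + b * s)| = |b| * |t - s| := by rw [← abs_mul]; ring_nf
    _ ≤ |t - s| := mul_le_of_le_one_left (abs_nonneg _) hb

section Cube

variable {ι : Type*} [DecidableEq ι]

theorem update_mem_cube {w : ι → ℝ} (hw : ∀ i, |w i| ≤ 1) {j : ι} {t : ℝ} (ht : |t| ≤ 1) :
    ∀ i, |update w j t i| ≤ 1 := by
  intro i
  rcases eq_or_ne i j with rfl | h
  · simpa using ht
  · simpa [h] using hw i

theorem abs_sub_le_sum_abs_sub_of_update {f : (ι → ℝ) → ℝ}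
    (hf : ∀ w, (∀ i, |w i| ≤ 1) → ∀ j t, |t| ≤ 1 → |f (update w j t) - f w| ≤ |t - w j|)
    (s : Finset ι) {z z' : ι → ℝ} (hz : ∀ i, |z i| ≤ 1) (hz' : ∀ i, |z' i| ≤ 1)
    (hs : ∀ i ∉ s, z i = z' i) :
    |f z - f z'| ≤ ∑ i ∈ s, |z i - z' i| := by
  induction s using Finset.induction_on generalizing z with
  | empty =>
    obtain rfl : z = z' := funext fun i => hs i (notMem_empty i)
    simp
  | insert j s hj ih =>
    set y := update z j (z' j)
    have hy : ∀ i ∉ s, y i = z' i := by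
      intro i hi
      rcases eq_or_ne i j with rfl | h
      · simp [y]
      · simpa [y, h] using hs i (by simp [h, hi])
    have hstep : |f z - f y| ≤ |z j - z' j| := by
      rw [abs_sub_comm (f z), abs_sub_comm (z j)]; exact hf z hz j (z' j) (hz' j)
    calc |f z - f z'| ≤ |f z - f y| + |f y - f z'| := abs_sub_le _ _ _
      _ ≤ |z j - z' j| + ∑ i ∈ s, |y i - z' i| :=
        add_le_add hstep (ih (update_mem_cube hz (hz' j)) hy)
      _ = ∑ i ∈ insert j s, |z i - z' i| := by
        rw [sum_insert hj]
        congr 1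
        refine sum_congr rfl fun i hi => ?_
        rw [show y i = z i from update_of_ne (ne_of_mem_of_not_mem hi hj) _ _]

theorem abs_update_sub_le_of_affine {f : (ι → ℝ) → ℝ}
    (hf : ∀ w j, ∃ a b : ℝ, ∀ t, f (update w j t) = a + b * t)
    (hbound : ∀ z, (∀ i, |z i| ≤ 1) → |f z| ≤ 1) {w : ι → ℝ} (hw : ∀ i, |w i| ≤ 1) (j : ι)
    (t : ℝ) : |f (update w j t) - f w| ≤ |t - w j| := by
  obtain ⟨a, b, hline⟩ := hf w j
  have hbd : ∀ u : ℝ, |u| ≤ 1 → |a + b * u| ≤ 1 := fun u hu =>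
    hline u ▸ hbound _ (update_mem_cube hw hu)
  have hfw : f w = a + b * w j := by simpa using hline (w j)
  rw [hline, hfw]
  exact abs_add_mul_sub_add_mul_le (by simpa using hbd 1 (by simp))
    (by simpa [← sub_eq_add_neg] using hbd (-1) (by simp))

end Cube

/-- Folklore multilinear Lipschitz bound: if `C : [-1,1]^N → [-1,1]` is multilinear
(a real polynomial of degree at most 1 in each variable, bounded by 1 on the cube), then
for all `z, z'` in the cube, `|C(z) − C(z')| ≤ 2N·‖z − z'‖_∞`. -/
theorem multilinear_lipschitz (N : ℕ) (coef : Finset (Fin N) → ℝ) (C : (Fin N → ℝ) → ℝ)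
    (hC : ∀ z, C z = ∑ S : Finset (Fin N), coef S * ∏ i ∈ S, z i)
    (hbound : ∀ z : Fin N → ℝ, (∀ i, |z i| ≤ 1) → |C z| ≤ 1) :
    ∀ z z' : Fin N → ℝ, (∀ i, |z i| ≤ 1) → (∀ i, |z' i| ≤ 1) →
      |C z - C z'| ≤ 2 * N * ‖z - z'‖ := by
  have hline : ∀ w j, ∃ a b : ℝ, ∀ t, C (update w j t) = a + b * t := fun w j => by
    simpa only [hC] using exists_sum_prod_update_eq_add_mul coef w j
  intro z z' hz hz'
  calc |C z - C z'| ≤ ∑ i, |z i - z' i| :=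
        abs_sub_le_sum_abs_sub_of_update
          (fun w hw j t _ => abs_update_sub_le_of_affine hline hbound hw j t) univ hz hz' (by simp)
    _ ≤ ∑ _i : Fin N, ‖z - z'‖ := sum_le_sum fun i _ => norm_le_pi_norm (z - z') i
    _ = N * ‖z - z'‖ := by simp
    _ ≤ 2 * N * ‖z - z'‖ := by nlinarith [norm_nonneg (z - z'), (N.cast_nonneg : (0 : ℝ) ≤ N)]
end

section
/- (Polarization of random walks) Let A₁, …, A_m ∈ [-1,1] be independent symmetric random variables with E[A_i²] ≥ p for all i. Define B₀ = 0 and B_i = B_{i-1} + (1 − |B_{i-1}|)·A_i for i = 1, …, m. Then E[B_m²] ≥ 1 − 3·exp(−mp/16). -/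
open MeasureTheory ProbabilityTheory

/-- The polarizing random walk: `B₀ = 0`, `B_{i+1} = B_i + (1 − |B_i|)·A_{i+1}`. -/
noncomputable def polarWalk {Ω : Type*} (A : ℕ → Ω → ℝ) : ℕ → Ω → ℝ
  | 0 => fun _ => 0
  | (i + 1) => fun ω => polarWalk A i ω + (1 - |polarWalk A i ω|) * A (i + 1) ω

/-!
Track the potential `√(1 - |B_i|)`. Given `B_{i-1} = b`, the steps `(1 - |b|) A_i` and
`-(1 - |b|) A_i` are equally likely, and concavity of the square root,
`√(1 - a) + √(1 + a) ≤ 2 (1 - a²/16)`, makes the potential shrink in expectation by the factor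
`1 - E[A_i²]/16 ≤ exp(-p/16)`. Since `1 - b² ≤ 2 √(1 - |b|)`, this gives
`1 - E[B_m²] ≤ 2 exp(-mp/16)`.
-/

def polarStep (b a : ℝ) : ℝ := b + (1 - |b|) * a

noncomputable def polarPotential (b : ℝ) : ℝ := √(1 - |b|)

lemma abs_polarStep_le_one {b a : ℝ} (hb : |b| ≤ 1) (ha : |a| ≤ 1) : |polarStep b a| ≤ 1 := by
  calc |polarStep b a| ≤ |b| + (1 - |b|) * |a| := by
        simpa [polarStep, abs_mul, abs_of_nonneg (sub_nonneg.2 hb)] using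
          abs_add_le b ((1 - |b|) * a)
    _ ≤ |b| + (1 - |b|) * 1 := by gcongr
    _ = 1 := by ring

lemma polarPotential_nonneg (b : ℝ) : 0 ≤ polarPotential b := Real.sqrt_nonneg _

lemma abs_polarPotential_le_one (b : ℝ) : |polarPotential b| ≤ 1 := by
  rw [abs_of_nonneg (polarPotential_nonneg b)]
  exact Real.sqrt_le_one.2 (by linarith [abs_nonneg b])

lemma sqrt_one_sub_add_sqrt_one_add_le {a : ℝ} (ha : |a| ≤ 1) :
    √(1 - a) + √(1 + a) ≤ 2 * (1 - a ^ 2 / 16) := by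
  obtain ⟨ha₁, ha₂⟩ := abs_le.1 ha
  have hprod : √(1 - a) * √(1 + a) ≤ 1 - a ^ 2 / 2 := by
    rw [← Real.sqrt_mul (by linarith)]
    exact Real.sqrt_le_iff.2 ⟨by nlinarith, by nlinarith⟩
  have hsq : (√(1 - a) + √(1 + a)) ^ 2 ≤ (2 * (1 - a ^ 2 / 16)) ^ 2 := by
    nlinarith [Real.sq_sqrt (by linarith : 0 ≤ 1 - a), Real.sq_sqrt (by linarith : 0 ≤ 1 + a)]
  exact (pow_le_pow_iff_left₀ (by positivity) (by nlinarith) two_ne_zero).1 hsq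

lemma polarPotential_step_add_step_neg_le {b a : ℝ} (hb : |b| ≤ 1) (ha : |a| ≤ 1) :
    polarPotential (polarStep b a) + polarPotential (polarStep b (-a)) ≤
      2 * polarPotential b * (1 - a ^ 2 / 16) := by
  have hd : 0 ≤ 1 - |b| := sub_nonneg.2 hb
  -- `t` is `a` or `-a` according to the sign of `b`.
  obtain ⟨t, ht, hplus, hminus⟩ : ∃ t, |t| = |a| ∧ 1 - |polarStep b a| ≤ (1 - |b|) * (1 - t) ∧
      1 - |polarStep b (-a)| ≤ (1 - |b|) * (1 + t) := by
    unfold polarStep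
    rcases le_total 0 b with hb₀ | hb₀
    · refine ⟨a, rfl, ?_, ?_⟩ <;> rw [abs_of_nonneg hb₀] <;>
        linarith [le_abs_self (b + (1 - b) * a), le_abs_self (b + (1 - b) * -a)]
    · refine ⟨-a, abs_neg a, ?_, ?_⟩ <;> rw [abs_of_nonpos hb₀] <;>
        linarith [neg_abs_le (b + (1 - -b) * a), neg_abs_le (b + (1 - -b) * -a)]
  calc polarPotential (polarStep b a) + polarPotential (polarStep b (-a))
      ≤ √(1 - |b|) * √(1 - t) + √(1 - |b|) * √(1 + t) := by
        unfold polarPotential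
        rw [← Real.sqrt_mul hd, ← Real.sqrt_mul hd]
        gcongr
    _ = polarPotential b * (√(1 - t) + √(1 + t)) := by rw [polarPotential, mul_add]
    _ ≤ polarPotential b * (2 * (1 - t ^ 2 / 16)) := by
        gcongr
        · exact polarPotential_nonneg b
        · exact sqrt_one_sub_add_sqrt_one_add_le (ht.trans_le ha)
    _ = 2 * polarPotential b * (1 - a ^ 2 / 16) := by rw [← sq_abs t, ht, sq_abs]; ring

lemma one_sub_sq_le_two_mul_polarPotential {b : ℝ} (hb : |b| ≤ 1) :
    1 - b ^ 2 ≤ 2 * polarPotential b := by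
  have hd : 0 ≤ 1 - |b| := sub_nonneg.2 hb
  calc 1 - b ^ 2 = (1 - |b|) * (1 + |b|) := by rw [← sq_abs]; ring
    _ ≤ (1 - |b|) * 2 := by gcongr; linarith
    _ ≤ polarPotential b * 2 := by
        gcongr
        exact (Real.le_sqrt hd hd).2 (by nlinarith [abs_nonneg b])
    _ = 2 * polarPotential b := mul_comm _ _

lemma measurable_polarPotential : Measurable polarPotential :=
  (measurable_const.sub measurable_abs).sqrt

lemma Measurable.polarStep {Ω : Type*} {mΩ : MeasurableSpace Ω} {f g : Ω → ℝ}
    (hf : Measurable f) (hg : Measurable g) : Measurable fun ω => polarStep (f ω) (g ω) :=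
  hf.add ((measurable_const.sub hf.abs).mul hg)

section Walk

variable {Ω : Type*} {A : ℕ → Ω → ℝ}

lemma abs_polarWalk_le_one {i : ℕ} (hA : ∀ j, 1 ≤ j → j ≤ i → ∀ ω, |A j ω| ≤ 1) (ω : Ω) :
    |polarWalk A i ω| ≤ 1 := by
  induction i with
  | zero => simp [polarWalk]
  | succ i ih =>
    exact abs_polarStep_le_one (ih fun j hj _ => hA j hj (by omega))
      (hA (i + 1) (by omega) le_rfl ω)

lemma measurable_polarWalk {mΩ : MeasurableSpace Ω} {i : ℕ}
    (hA : ∀ j, 1 ≤ j → j ≤ i → Measurable (A j)) : Measurable (polarWalk A i) := by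
  induction i with
  | zero => exact measurable_const
  | succ i ih =>
    exact (ih fun j hj _ => hA j hj (by omega)).polarStep (hA (i + 1) (by omega) le_rfl)

lemma indepFun_polarWalk {mΩ : MeasurableSpace Ω} {μ : Measure Ω} {m : ℕ}
    (hmeas : ∀ i, Measurable (A i)) (hindep : iIndepFun (fun i : Fin m => A (i.1 + 1)) μ)
    {i : ℕ} (hi : i < m) : IndepFun (polarWalk A i) (A (i + 1)) μ := by
  have hST : Disjoint {j : Fin m | j.1 < i} {⟨i, hi⟩} := by simp
  have h := indep_iSup_of_disjoint (fun j => (hmeas _).comap_le) hindep.iIndep hST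
  rw [IndepFun_iff_Indep]
  refine indep_of_indep_of_le h (Measurable.comap_le ?_) (le_iSup₂_of_le ⟨i, hi⟩ rfl le_rfl)
  refine measurable_polarWalk fun j hj _ => ?_
  obtain ⟨k, rfl⟩ : ∃ k, j = k + 1 := ⟨j - 1, by omega⟩
  exact (comap_measurable _).mono
    (le_iSup₂_of_le ⟨k, by omega⟩ (show k < i by omega) le_rfl) le_rfl

end Walk

section Integrals

variable {Ω : Type*} {mΩ : MeasurableSpace Ω} {μ : Measure Ω}

lemma ProbabilityTheory.IndepFun.identDistrib_prodMk_neg {E F : Type*} [MeasurableSpace E]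
    [MeasurableSpace F] [Neg F] [MeasurableNeg F] [IsFiniteMeasure μ] {B : Ω → E} {X : Ω → F}
    (hB : AEMeasurable B μ) (hX : AEMeasurable X μ) (hind : IndepFun B X μ)
    (hsymm : μ.map (fun ω => -X ω) = μ.map X) :
    IdentDistrib (fun ω => (B ω, -X ω)) (fun ω => (B ω, X ω)) μ μ :=
  (IdentDistrib.refl hB).prodMk ⟨hX.neg, hX, hsymm⟩ (hind.comp measurable_id measurable_neg) hind

lemma integrable_of_abs_le_one [IsFiniteMeasure μ] {f : Ω → ℝ} (hf : Measurable f)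
    (h : ∀ ω, |f ω| ≤ 1) : Integrable f μ :=
  .of_bound hf.aestronglyMeasurable 1 (ae_of_all _ h)

lemma integral_polarPotential_polarStep_le [IsFiniteMeasure μ] {B X : Ω → ℝ}
    (hB : Measurable B) (hX : Measurable X) (hB1 : ∀ ω, |B ω| ≤ 1) (hX1 : ∀ ω, |X ω| ≤ 1)
    (hind : IndepFun B X μ) (hsymm : μ.map (fun ω => -X ω) = μ.map X) :
    ∫ ω, polarPotential (polarStep (B ω) (X ω)) ∂μ ≤
      (1 - (∫ ω, X ω ^ 2 ∂μ) / 16) * ∫ ω, polarPotential (B ω) ∂μ := by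
  have hΦ : Measurable fun ω => polarPotential (B ω) := measurable_polarPotential.comp hB
  have hX2 : Measurable fun ω => X ω ^ 2 := hX.pow_const 2
  have hX21 (ω : Ω) : |X ω ^ 2| ≤ 1 := by
    rw [abs_pow]; exact pow_le_one₀ (abs_nonneg _) (hX1 ω)
  have hgint (Y : Ω → ℝ) (hY : Measurable Y) :
      Integrable (fun ω => polarPotential (polarStep (B ω) (Y ω))) μ :=
    integrable_of_abs_le_one (measurable_polarPotential.comp (hB.polarStep hY))
      fun ω => abs_polarPotential_le_one _
  have hΦX2 : Integrable (fun ω => polarPotential (B ω) * X ω ^ 2) μ :=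
    integrable_of_abs_le_one (hΦ.mul hX2) fun ω => by
      rw [abs_mul]; exact mul_le_one₀ (abs_polarPotential_le_one _) (abs_nonneg _) (hX21 ω)
  have hreflect : ∫ ω, polarPotential (polarStep (B ω) (-X ω)) ∂μ =
      ∫ ω, polarPotential (polarStep (B ω) (X ω)) ∂μ :=
    ((hind.identDistrib_prodMk_neg hB.aemeasurable hX.aemeasurable hsymm).comp
      (measurable_polarPotential.comp (measurable_fst.polarStep measurable_snd))).integral_eq
  have hfactor : ∫ ω, polarPotential (B ω) * X ω ^ 2 ∂μ =
      (∫ ω, polarPotential (B ω) ∂μ) * ∫ ω, X ω ^ 2 ∂μ :=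
    (hind.comp measurable_polarPotential (measurable_id.pow_const 2)).integral_mul_eq_mul_integral
      hΦ.aestronglyMeasurable hX2.aestronglyMeasurable
  have hΦint : Integrable (fun ω => polarPotential (B ω)) μ :=
    integrable_of_abs_le_one hΦ fun ω => abs_polarPotential_le_one _
  have hsum : ∫ ω, polarPotential (polarStep (B ω) (X ω)) ∂μ +
      ∫ ω, polarPotential (polarStep (B ω) (-X ω)) ∂μ ≤
      2 * ∫ ω, polarPotential (B ω) ∂μ - 8⁻¹ * ∫ ω, polarPotential (B ω) * X ω ^ 2 ∂μ := by
    have hplus := hgint X hX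
    have hminus := hgint (fun ω => -X ω) hX.neg
    rw [← integral_add hplus hminus, ← integral_const_mul, ← integral_const_mul,
      ← integral_sub (hΦint.const_mul 2) (hΦX2.const_mul 8⁻¹)]
    refine integral_mono (hplus.add hminus) ((hΦint.const_mul 2).sub (hΦX2.const_mul 8⁻¹))
      fun ω => ?_
    exact (polarPotential_step_add_step_neg_le (hB1 ω) (hX1 ω)).trans_eq (by ring)
  rw [hreflect, hfactor] at hsum
  linarith

lemma one_sub_integral_sq_le [IsProbabilityMeasure μ] {B : Ω → ℝ} (hB : Measurable B)
    (hB1 : ∀ ω, |B ω| ≤ 1) :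
    1 - ∫ ω, B ω ^ 2 ∂μ ≤ 2 * ∫ ω, polarPotential (B ω) ∂μ := by
  have hB2 : Integrable (fun ω => B ω ^ 2) μ :=
    integrable_of_abs_le_one (hB.pow_const 2) fun ω => by
      rw [abs_pow]; exact pow_le_one₀ (abs_nonneg _) (hB1 ω)
  have hΦ : Integrable (fun ω => polarPotential (B ω)) μ :=
    integrable_of_abs_le_one (measurable_polarPotential.comp hB) fun ω =>
      abs_polarPotential_le_one _
  calc 1 - ∫ ω, B ω ^ 2 ∂μ = ∫ ω, (1 - B ω ^ 2) ∂μ := by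
        rw [integral_sub (integrable_const _) hB2, integral_const, probReal_univ, one_smul]
    _ ≤ ∫ ω, 2 * polarPotential (B ω) ∂μ :=
        integral_mono ((integrable_const _).sub hB2) (hΦ.const_mul 2) fun ω =>
          one_sub_sq_le_two_mul_polarPotential (hB1 ω)
    _ = 2 * ∫ ω, polarPotential (B ω) ∂μ := integral_const_mul _ _

lemma integral_polarPotential_polarWalk_le [IsProbabilityMeasure μ] {m : ℕ} {p : ℝ}
    {A : ℕ → Ω → ℝ} (hmeas : ∀ i, Measurable (A i))
    (hindep : iIndepFun (fun i : Fin m => A (i.1 + 1)) μ)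
    (hA1 : ∀ i, 1 ≤ i → i ≤ m → ∀ ω, |A i ω| ≤ 1)
    (hsymm : ∀ i, 1 ≤ i → i ≤ m → μ.map (fun ω => -A i ω) = μ.map (A i))
    (hvar : ∀ i, 1 ≤ i → i ≤ m → p ≤ ∫ ω, A i ω ^ 2 ∂μ) {i : ℕ} (hi : i ≤ m) :
    ∫ ω, polarPotential (polarWalk A i ω) ∂μ ≤ Real.exp (-(i * p) / 16) := by
  induction i with
  | zero => simp [polarWalk, polarPotential]
  | succ i ih =>
    have hB1 : ∀ ω, |polarWalk A i ω| ≤ 1 :=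
      abs_polarWalk_le_one fun j hj _ => hA1 j hj (by omega)
    have hΦ : 0 ≤ ∫ ω, polarPotential (polarWalk A i ω) ∂μ :=
      integral_nonneg fun _ => polarPotential_nonneg _
    calc ∫ ω, polarPotential (polarWalk A (i + 1) ω) ∂μ
        ≤ (1 - (∫ ω, A (i + 1) ω ^ 2 ∂μ) / 16) * ∫ ω, polarPotential (polarWalk A i ω) ∂μ :=
          integral_polarPotential_polarStep_le (measurable_polarWalk fun j _ _ => hmeas j)
            (hmeas _) hB1 (hA1 _ (by omega) hi) (indepFun_polarWalk hmeas hindep hi)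
            (hsymm _ (by omega) hi)
      _ ≤ Real.exp (-p / 16) * Real.exp (-(i * p) / 16) := by
          gcongr
          · linarith [hvar _ (by omega) hi, Real.add_one_le_exp (-p / 16)]
          · exact ih (by omega)
      _ = Real.exp (-((i + 1 : ℕ) * p) / 16) := by rw [← Real.exp_add]; push_cast; ring_nf

end Integrals

/-- Polarization of random walks: if `A₁, …, A_m ∈ [-1,1]` are independent symmetric random
variables with `E[A_i²] ≥ p`, and `B_i` is the polarizing walk driven by them, then
`E[B_m²] ≥ 1 − 3·exp(−mp/16)`. -/
theorem polarizing_walk_bound (Ω : Type) [MeasureSpace Ω]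
    [IsProbabilityMeasure (ℙ : Measure Ω)] (m : ℕ) (p : ℝ) (A : ℕ → Ω → ℝ)
    (hmeas : ∀ i, Measurable (A i))
    (hindep : iIndepFun (fun i : Fin m => A (i.1 + 1)) ℙ)
    (hbdd : ∀ i, 1 ≤ i → i ≤ m → ∀ ω, A i ω ∈ Set.Icc (-1 : ℝ) 1)
    (hsymm : ∀ i, 1 ≤ i → i ≤ m →
      Measure.map (fun ω => -(A i ω)) ℙ = Measure.map (A i) ℙ)
    (hvar : ∀ i, 1 ≤ i → i ≤ m → p ≤ ∫ ω, (A i ω) ^ 2 ∂ℙ) :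
    1 - 3 * Real.exp (-(m * p) / 16) ≤ ∫ ω, (polarWalk A m ω) ^ 2 ∂ℙ := by
  have hA1 : ∀ i, 1 ≤ i → i ≤ m → ∀ ω, |A i ω| ≤ 1 :=
    fun i h1 h2 ω => abs_le.2 (hbdd i h1 h2 ω)
  have hdecay := integral_polarPotential_polarWalk_le hmeas hindep hA1 hsymm hvar le_rfl
  have hsq := one_sub_integral_sq_le (μ := ℙ) (measurable_polarWalk fun j _ _ => hmeas j)
    (abs_polarWalk_le_one hA1)
  linarith [Real.exp_pos (-(m * p) / 16)]
end
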